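/- For every n ≥ 2, the sequence of encoded vertices v^n(1), v^n(2), …, v^n(2^{n−1}) is strictly increasing: for all 1 ≤ k < ℓ ≤ 2^{n−1}, v^n(k) < v^n(ℓ). -/

import Mathlib

/-- Integer encoding of a binary vector (MSB first): code(x) = Σ x_j 2^(m-j). -/
def code (x : List Bool) : ℕ := x.foldl (fun a b => 2 * a + (if b then 1 else 0)) 0

/-- m-bit binary representation (MSB first) of an integer k. -/
def decode (m k : ℕ) : List Bool := (List.range m).map (fun j => k.testBit (m - 1 - j))

/-- Agreement-indicator map: λ(x) lists 𝟙(x_i = x_j) for pairs i < j in lex order. -/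
def lam : List Bool → List Bool
  | [] => []
  | a :: t => (t.map (fun b => a == b)) ++ lam t

/-- Integer-level map λ#_n. -/
def lambdaSharp (n k : ℕ) : ℕ := code (lam (decode n k))

/-- Encoded vertices of 𝟙-CUT(n): v^n(k) = λ#_n(2^(n-1) + k - 1). -/
def v (n k : ℕ) : ℕ := lambdaSharp n (2 ^ (n - 1) + k - 1)

/-!
Writing the argument as `2 ^ (n - 1) + j` with `j < 2 ^ (n - 1)` fixes its first bit to `1`, and
`λ (1 :: t) = t ++ λ t`. Hence `v^n(j + 1) = j * 2 ^ N + r` with `N = (n - 1).choose 2` and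
`r = code (λ t) < 2 ^ N`: the vertex code is `j` followed by `N` lower-order bits, so it is
strictly increasing in `j`.
-/

lemma code_foldl (x : List Bool) (a : ℕ) :
    x.foldl (fun a b => 2 * a + (if b then 1 else 0)) a = a * 2 ^ x.length + code x := by
  induction x generalizing a with
  | nil => simp [code]
  | cons b t ih =>
    simp only [List.foldl_cons, code, List.length_cons]
    rw [ih, ih (2 * 0 + _)]
    ring

lemma code_cons (b : Bool) (t : List Bool) :
    code (b :: t) = (if b then 1 else 0) * 2 ^ t.length + code t := by
  rw [code, List.foldl_cons, code_foldl]
  simp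

lemma code_append (x y : List Bool) : code (x ++ y) = code x * 2 ^ y.length + code y := by
  rw [code, List.foldl_append, code_foldl]
  rfl

lemma code_lt_two_pow_length (x : List Bool) : code x < 2 ^ x.length := by
  induction x with
  | nil => simp [code]
  | cons b t ih =>
    rw [code_cons, List.length_cons, pow_succ]
    cases b <;> simp <;> omega

lemma length_decode (m k : ℕ) : (decode m k).length = m := by simp [decode]

lemma decode_succ (m k : ℕ) : decode (m + 1) k = k.testBit m :: decode m k := by
  simp only [decode, List.range_succ_eq_map, List.map_cons, List.map_map,
    Nat.add_sub_cancel, Nat.sub_zero]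
  congr 1
  refine List.map_congr_left fun j _ => ?_
  simp only [Function.comp_apply]
  congr 1
  omega

lemma code_decode (m k : ℕ) : code (decode m k) = k % 2 ^ m := by
  induction m with
  | zero => simp [decode, code, Nat.mod_one]
  | succ m ih =>
    rw [decode_succ, code_cons, length_decode, ih, Nat.testBit_eq_decide_div_mod_eq,
      pow_succ, Nat.mod_mul]
    rcases Nat.mod_two_eq_zero_or_one (k / 2 ^ m) with h | h <;> simp [h, add_comm, mul_comm]

lemma length_lam (x : List Bool) : (lam x).length = x.length.choose 2 := by
  induction x with
  | nil => rfl
  | cons a t ih => simp [lam, ih, Nat.choose_succ_succ]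

lemma lambdaSharp_lt (m k : ℕ) : lambdaSharp m k < 2 ^ m.choose 2 := by
  rw [lambdaSharp]
  simpa [length_lam, length_decode] using code_lt_two_pow_length (lam (decode m k))

lemma lambdaSharp_succ_of_testBit {m k : ℕ} (hk : k.testBit m = true) :
    lambdaSharp (m + 1) k = k % 2 ^ m * 2 ^ m.choose 2 + lambdaSharp m k := by
  rw [lambdaSharp, decode_succ, hk, lam]
  simp only [Bool.true_beq, List.map_id']
  rw [code_append, code_decode, length_lam, length_decode, lambdaSharp]

lemma lambdaSharp_two_pow_add {m j : ℕ} (hj : j < 2 ^ m) :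
    lambdaSharp (m + 1) (2 ^ m + j) = j * 2 ^ m.choose 2 + lambdaSharp m (2 ^ m + j) := by
  have hbit : (2 ^ m + j).testBit m = true := by
    simp [Nat.testBit_two_pow_add_eq, Nat.testBit_eq_false_of_lt hj]
  rw [lambdaSharp_succ_of_testBit hbit, Nat.add_mod_left, Nat.mod_eq_of_lt hj]

lemma lambdaSharp_two_pow_add_lt {m i j : ℕ} (hij : i < j) (hj : j < 2 ^ m) :
    lambdaSharp (m + 1) (2 ^ m + i) < lambdaSharp (m + 1) (2 ^ m + j) := by
  rw [lambdaSharp_two_pow_add (hij.trans hj), lambdaSharp_two_pow_add hj]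
  calc i * 2 ^ m.choose 2 + lambdaSharp m (2 ^ m + i)
      < (i + 1) * 2 ^ m.choose 2 := by rw [add_one_mul]; linarith [lambdaSharp_lt m (2 ^ m + i)]
    _ ≤ j * 2 ^ m.choose 2 := Nat.mul_le_mul_right _ hij
    _ ≤ _ := Nat.le_add_right _ _

theorem stmt_5_general (n : ℕ) (k l : ℕ)
    (hk : 1 ≤ k) (hkl : k < l) (hl : l ≤ 2 ^ (n - 1)) :
    v n k < v n l := by
  obtain _ | m := n
  · simp at hl
    omega
  obtain ⟨i, rfl⟩ : ∃ i, k = i + 1 := ⟨k - 1, by omega⟩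
  obtain ⟨j, rfl⟩ : ∃ j, l = j + 1 := ⟨l - 1, by omega⟩
  simp only [Nat.add_sub_cancel] at hl
  simpa [v] using lambdaSharp_two_pow_add_lt (by omega : i < j) (by omega : j < 2 ^ m)

theorem stmt_5 (n : ℕ) (hn : 2 ≤ n) (k l : ℕ)
    (hk : 1 ≤ k) (hkl : k < l) (hl : l ≤ 2 ^ (n - 1)) :
    v n k < v n l :=
  stmt_5_general n k l hk hkl hl
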